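/- arXiv:1308.5856 — 4 statements merged into one kernel-verified Lean document; each statement's English description precedes it below -/
import Mathlib

section
/- Let G be a group and u_1, ..., u_{g-1} elements satisfying the braid relations, with Δ_g the fundamental element (Δ_1 = 1, Δ_m = (u_1 ⋯ u_{m-1}) Δ_{m-1}). Then Δ_g² = u_{g-1}² (u_{g-2} u_{g-1}² u_{g-2}) (u_{g-3} u_{g-2} u_{g-1}² u_{g-2} u_{g-3}) ⋯ (u_1 u_2 ⋯ u_{g-1}² ⋯ u_2 u_1), where the i-th factor from the left is (u_{g-i} ⋯ u_{g-2}) u_{g-1}² (u_{g-2} ⋯ u_{g-i}). -/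
/-!
Write `Aₘ = u₁ ⋯ uₘ`, `Dₘ = uₘ ⋯ u₁`, and `Δ'` for the fundamental element of the shifted
family `u₂, u₃, …`. Conjugation by `Aₘ₊₁` raises the indices `1, …, m` by one, so
`Aₘ₊₁ Dₘ = Dₘ₊₁ A'ₘ`, and inductively `Δₘ₊₁ = Dₘ Δ'ₘ` next to the defining `Δₘ₊₁ = Aₘ Δₘ`.
Using both factorizations, induction gives `Δₘ₊₁ uᵢ = uₘ₊₁₋ᵢ Δₘ₊₁`; hence `Δₘ₊₁ Dₘ = Aₘ Δₘ₊₁`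
and `Δₘ₊₁² = Δₘ₊₁ Dₘ Δ'ₘ = Aₘ Dₘ Δ'ₘ²`. As `Δₘ₊₁²` commutes with every `uᵢ`, also
`Δₘ₊₁² = Δ'ₘ² Aₘ Dₘ`, and unfolding this recursion gives the product, whose last factor is
`Aₘ Dₘ = u₁ ⋯ uₘ² ⋯ u₁`.
-/

variable {G : Type*} [Group G]

/-- `prodAsc f m = f 1 * f 2 * ⋯ * f m` (empty product for `m = 0`). -/
def prodAsc (f : ℕ → G) (m : ℕ) : G :=
  ((List.range m).map (fun i => f (i + 1))).prod

/-- `prodDesc f m = f m * ⋯ * f 2 * f 1` (empty product for `m = 0`). -/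
def prodDesc (f : ℕ → G) (m : ℕ) : G :=
  (((List.range m).reverse).map (fun i => f (i + 1))).prod

/-- The fundamental braid element: `Δ 0 = Δ 1 = 1`, `Δ (m+1) = (u 1 ⋯ u m) * Δ m`. -/
def braidDelta (u : ℕ → G) : ℕ → G
  | 0 => 1
  | m + 1 => prodAsc u m * braidDelta u m

structure BraidRelations (u : ℕ → G) (n : ℕ) : Prop where
  comm : ∀ i j, 1 ≤ i → i + 2 ≤ j → j ≤ n → Commute (u i) (u j)
  braid : ∀ i, 1 ≤ i → i + 1 ≤ n → u i * u (i + 1) * u i = u (i + 1) * u i * u (i + 1)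

namespace BraidRelations

variable {u : ℕ → G} {n : ℕ}

theorem mono (h : BraidRelations u n) {m : ℕ} (hmn : m ≤ n) : BraidRelations u m :=
  ⟨fun i j hi hij hj => h.comm i j hi hij (hj.trans hmn),
    fun i hi hin => h.braid i hi (hin.trans hmn)⟩

theorem shift (h : BraidRelations u (n + 1)) : BraidRelations (fun i => u (i + 1)) n :=
  ⟨fun i j hi hij hj => h.comm (i + 1) (j + 1) (by omega) (by omega) (by omega),
    fun i hi hin => h.braid (i + 1) (by omega) (by omega)⟩

theorem inv (h : BraidRelations u n) : BraidRelations (fun i => (u i)⁻¹) n :=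
  ⟨fun i j hi hij hj => (h.comm i j hi hij hj).inv_inv,
    fun i hi hin => by simpa [mul_assoc] using congrArg (·⁻¹) (h.braid i hi hin)⟩

end BraidRelations

section Products

variable (f : ℕ → G) (m : ℕ)

theorem prodAsc_succ : prodAsc f (m + 1) = prodAsc f m * f (m + 1) := by
  simp [prodAsc, List.range_succ]

theorem prodAsc_succ' : prodAsc f (m + 1) = f 1 * prodAsc (fun i => f (i + 1)) m := by
  simp [prodAsc, List.range_succ_eq_map, Function.comp_def]

theorem prodDesc_succ : prodDesc f (m + 1) = f (m + 1) * prodDesc f m := by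
  simp [prodDesc, List.range_succ]

theorem prodDesc_succ' : prodDesc f (m + 1) = prodDesc (fun i => f (i + 1)) m * f 1 := by
  simp [prodDesc, List.range_succ_eq_map, List.map_reverse, Function.comp_def]

theorem prodDesc_eq_inv_prodAsc_inv : prodDesc f m = (prodAsc (fun i => (f i)⁻¹) m)⁻¹ := by
  induction m with
  | zero => simp [prodAsc, prodDesc]
  | succ m ih => rw [prodDesc_succ, prodAsc_succ, mul_inv_rev, inv_inv, ih]

theorem prodDesc_reflect : prodDesc (fun i => f (m + 1 - i)) m = prodAsc f m := by
  induction m with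
  | zero => rfl
  | succ m ih =>
    rw [prodDesc_succ', prodAsc_succ, ← ih]
    congr 2
    funext i
    congr 1
    omega

variable {f m} {a : G} {g : ℕ → G}

theorem SemiconjBy.prodAsc (h : ∀ i, 1 ≤ i → i ≤ m → SemiconjBy a (f i) (g i)) :
    SemiconjBy a (prodAsc f m) (prodAsc g m) := by
  induction m with
  | zero => exact SemiconjBy.one_right a
  | succ m ih =>
    rw [prodAsc_succ, prodAsc_succ]
    exact (ih fun i hi him => h i hi (by omega)).mul_right (h (m + 1) (by omega) le_rfl)

theorem SemiconjBy.prodDesc (h : ∀ i, 1 ≤ i → i ≤ m → SemiconjBy a (f i) (g i)) :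
    SemiconjBy a (prodDesc f m) (prodDesc g m) := by
  induction m with
  | zero => exact SemiconjBy.one_right a
  | succ m ih =>
    rw [prodDesc_succ, prodDesc_succ]
    exact (h (m + 1) (by omega) le_rfl).mul_right (ih fun i hi him => h i hi (by omega))

end Products

namespace BraidRelations

variable {u : ℕ → G} {m : ℕ}

theorem semiconjBy_prodAsc (h : BraidRelations u m) {i : ℕ} (hi : 1 ≤ i) (him : i < m) :
    SemiconjBy (prodAsc u m) (u i) (u (i + 1)) := by
  induction m with
  | zero => omega
  | succ m ih =>
    rw [prodAsc_succ]
    rcases Nat.lt_or_ge i m with him' | hmi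
    · exact (ih (h.mono m.le_succ) him').mul_left (h.comm i (m + 1) hi (by omega) le_rfl).symm
    · obtain ⟨k, rfl, rfl⟩ : ∃ k, i = k + 1 ∧ m = k + 1 := ⟨i - 1, by omega, by omega⟩
      have hk : Commute (u (k + 2)) (prodAsc u k) :=
        SemiconjBy.prodAsc fun j hj hjk => (h.comm j (k + 2) hj (by omega) le_rfl).symm
      have hbraid : SemiconjBy (u (k + 1) * u (k + 2)) (u (k + 1)) (u (k + 2)) := by
        simpa [SemiconjBy, mul_assoc] using h.braid (k + 1) (by omega) le_rfl
      rw [prodAsc_succ, mul_assoc]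
      exact SemiconjBy.mul_left hk.symm hbraid

theorem semiconjBy_prodDesc (h : BraidRelations u m) {i : ℕ} (hi : 1 ≤ i) (him : i < m) :
    SemiconjBy (prodDesc u m) (u (i + 1)) (u i) := by
  simpa [prodDesc_eq_inv_prodAsc_inv] using
    SemiconjBy.inv_inv_symm_iff.2 (h.inv.semiconjBy_prodAsc hi him)

theorem prodAsc_mul_prodDesc (h : BraidRelations u (m + 1)) :
    prodAsc u (m + 1) * prodDesc u m = prodDesc u (m + 1) * prodAsc (fun i => u (i + 1)) m :=
  calc prodAsc u (m + 1) * prodDesc u m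
      = prodDesc (fun i => u (i + 1)) m * prodAsc u (m + 1) :=
        (SemiconjBy.prodDesc fun i hi him => h.semiconjBy_prodAsc hi (by omega)).eq
    _ = prodDesc u (m + 1) * prodAsc (fun i => u (i + 1)) m := by
        rw [prodAsc_succ', prodDesc_succ', mul_assoc]

theorem braidDelta_succ_eq_prodDesc_mul (h : BraidRelations u m) :
    braidDelta u (m + 1) = prodDesc u m * braidDelta (fun i => u (i + 1)) m := by
  induction m with
  | zero => simp [braidDelta, prodAsc, prodDesc]
  | succ m ih =>
    rw [braidDelta, ih (h.mono m.le_succ), ← mul_assoc, h.prodAsc_mul_prodDesc, mul_assoc]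
    rfl

theorem semiconjBy_braidDelta (h : BraidRelations u m) {i : ℕ} (hi : 1 ≤ i) (him : i ≤ m) :
    SemiconjBy (braidDelta u (m + 1)) (u i) (u (m + 1 - i)) := by
  induction m generalizing u i with
  | zero => omega
  | succ m ih =>
    rcases Nat.lt_or_ge i (m + 1) with him' | hmi
    · have hA := h.semiconjBy_prodAsc (i := m + 1 - i) (by omega) (by omega)
      rw [show m + 1 - i + 1 = m + 2 - i by omega] at hA
      exact hA.mul_left (ih (h.mono m.le_succ) hi (by omega))
    · obtain rfl : i = m + 1 := by omega
      cases m with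
      | zero => simp [braidDelta, prodAsc, SemiconjBy]
      | succ m =>
        rw [h.braidDelta_succ_eq_prodDesc_mul, Nat.add_sub_cancel_left]
        have hΔ := ih h.shift (i := m + 1) (by omega) le_rfl
        rw [show m + 1 + 1 - (m + 1) = 1 by omega] at hΔ
        exact (h.semiconjBy_prodDesc le_rfl (by omega)).mul_left hΔ

theorem braidDelta_mul_prodDesc (h : BraidRelations u m) :
    braidDelta u (m + 1) * prodDesc u m = prodAsc u m * braidDelta u (m + 1) := by
  rw [← prodDesc_reflect u m]
  exact (SemiconjBy.prodDesc (g := fun i => u (m + 1 - i))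
    fun i hi him => h.semiconjBy_braidDelta hi him).eq

theorem commute_braidDelta_sq (h : BraidRelations u m) {i : ℕ} (hi : 1 ≤ i) (him : i ≤ m) :
    Commute (braidDelta u (m + 1) ^ 2) (u i) := by
  have hback := h.semiconjBy_braidDelta (i := m + 1 - i) (by omega) (by omega)
  rw [show m + 1 - (m + 1 - i) = i by omega] at hback
  rw [pow_two]
  exact hback.mul_left (h.semiconjBy_braidDelta hi him)

theorem braidDelta_sq_succ (h : BraidRelations u m) :
    braidDelta u (m + 1) ^ 2 =
      braidDelta (fun i => u (i + 1)) m ^ 2 * (prodAsc u m * prodDesc u m) := by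
  have hsplit := h.braidDelta_succ_eq_prodDesc_mul
  have hsq : braidDelta u (m + 1) ^ 2 =
      prodAsc u m * prodDesc u m * braidDelta (fun i => u (i + 1)) m ^ 2 :=
    calc braidDelta u (m + 1) ^ 2
        = braidDelta u (m + 1) * prodDesc u m * braidDelta (fun i => u (i + 1)) m := by
          rw [pow_two, mul_assoc, ← hsplit]
      _ = prodAsc u m * (prodDesc u m * braidDelta (fun i => u (i + 1)) m) *
            braidDelta (fun i => u (i + 1)) m := by
          rw [h.braidDelta_mul_prodDesc, ← hsplit]
      _ = prodAsc u m * prodDesc u m * braidDelta (fun i => u (i + 1)) m ^ 2 := by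
          rw [pow_two]; simp only [mul_assoc]
  have hcentral : Commute (braidDelta u (m + 1) ^ 2) (prodAsc u m * prodDesc u m) :=
    Commute.mul_right (SemiconjBy.prodAsc fun i hi him => h.commute_braidDelta_sq hi him)
      (SemiconjBy.prodDesc fun i hi him => h.commute_braidDelta_sq hi him)
  rw [hsq] at hcentral ⊢
  exact ((IsLeftRegular.all _).commute_mul_left_iff.1 hcentral).eq

end BraidRelations

def conjSqProd (u : ℕ → G) (k : ℕ) : G :=
  ((List.range k).map fun i =>
    ((List.range i).map fun j => u (k - i + j)).prod * u k ^ 2 *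
      ((List.range i).reverse.map fun j => u (k - i + j)).prod).prod

theorem conjSqProd_succ (u : ℕ → G) (k : ℕ) :
    conjSqProd u (k + 1) =
      conjSqProd (fun i => u (i + 1)) k * (prodAsc u (k + 1) * prodDesc u (k + 1)) := by
  rw [conjSqProd, List.range_succ, List.map_append, List.prod_append, conjSqProd]
  congr 1
  · refine congrArg List.prod (List.map_congr_left fun i hi => ?_)
    have hik : i < k := List.mem_range.mp hi
    simp only [show ∀ j, k + 1 - i + j = k - i + j + 1 by omega]
  · have hlast : k + 1 - k = 1 := by omega
    simp only [hlast, List.map_singleton, List.prod_singleton, prodAsc_succ, prodDesc_succ]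
    rw [pow_two]
    simp only [prodAsc, prodDesc, add_comm 1, mul_assoc]

theorem BraidRelations.braidDelta_sq_eq_conjSqProd {u : ℕ → G} {k : ℕ}
    (h : BraidRelations u k) : braidDelta u (k + 1) ^ 2 = conjSqProd u k := by
  induction k generalizing u with
  | zero => simp [braidDelta, prodAsc, conjSqProd]
  | succ k ih => rw [h.braidDelta_sq_succ, ih h.shift, conjSqProd_succ]

theorem braidDelta_sq_eq_prod_conj_general (g : ℕ) (u : ℕ → G)
    (hu1 : ∀ i j, 1 ≤ i → i + 2 ≤ j → j ≤ g - 1 → u i * u j = u j * u i)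
    (hu2 : ∀ i, 1 ≤ i → i + 1 ≤ g - 1 → u i * u (i + 1) * u i = u (i + 1) * u i * u (i + 1)) :
    (braidDelta u g) ^ 2 =
      ((List.range (g - 1)).map (fun i0 =>
        (((List.range i0).map (fun j => u (g - (i0 + 1) + j))).prod) *
          (u (g - 1)) ^ 2 *
        ((((List.range i0).reverse).map (fun j => u (g - (i0 + 1) + j))).prod))).prod := by
  cases g with
  | zero => simp [braidDelta]
  | succ k => simpa [conjSqProd] using BraidRelations.braidDelta_sq_eq_conjSqProd ⟨hu1, hu2⟩

/-- Δ_g² = ∏_{i=1}^{g-1} (u_{g-i} ⋯ u_{g-2}) u_{g-1}² (u_{g-2} ⋯ u_{g-i}). -/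
theorem braidDelta_sq_eq_prod_conj (g : ℕ) (hg : 1 ≤ g) (u : ℕ → G)
    (hu1 : ∀ i j, 1 ≤ i → i + 2 ≤ j → j ≤ g - 1 → u i * u j = u j * u i)
    (hu2 : ∀ i, 1 ≤ i → i + 1 ≤ g - 1 → u i * u (i + 1) * u i = u (i + 1) * u i * u (i + 1)) :
    (braidDelta u g) ^ 2 =
      ((List.range (g - 1)).map (fun i0 =>
        (((List.range i0).map (fun j => u (g - (i0 + 1) + j))).prod) *
          (u (g - 1)) ^ 2 *
        ((((List.range i0).reverse).map (fun j => u (g - (i0 + 1) + j))).prod))).prod :=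
  braidDelta_sq_eq_prod_conj_general g u hu1 hu2
end

section
/- Let G be a group containing elements a_1, ..., a_{g-1} and u_1, ..., u_{g-1} such that: both families satisfy the braid relations among themselves, a_i u_j = u_j a_i whenever |i - j| > 1, a_i u_{i+1} u_i = u_{i+1} u_i a_{i+1} and a_{i+1} u_i u_{i+1} = u_i u_{i+1} a_i for all i, a_1 u_1 a_1 = u_1, and u_2 a_1 a_2 u_1 = a_1 a_2. Then a_i u_i a_i = u_i for every i = 1, ..., g-1. -/
/-!
Conjugation by `u (i+1) * u i` carries `a i` to `a (i+1)` (relation (C2)) and `u i` to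
`u (i+1)` (the braid relation), so it carries the relation `a i * u i * a i = u i` to the same
relation one index higher; induction from (C4) for `i = 1` gives it for all `i`.
-/

variable {G : Type*} [Group G]

theorem SemiconjBy.mul_mul_eq_of_mul_mul_eq {M : Type*} [LeftCancelMonoid M] {w x y x' y' : M}
    (hx : SemiconjBy w x' x) (hy : SemiconjBy w y' y) (h : x * y * x = y) :
    x' * y' * x' = y' := by
  have hxyx : SemiconjBy w (x' * y' * x') y := h ▸ (hx.mul_right hy).mul_right hx
  exact mul_left_cancel (hxyx.eq.trans hy.eq.symm)

theorem rel_C4a_general (g : ℕ) (a u : ℕ → G)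
    (hu2 : ∀ i, 1 ≤ i → i + 1 ≤ g - 1 → u i * u (i + 1) * u i = u (i + 1) * u i * u (i + 1))
    (hC2 : ∀ i, 1 ≤ i → i ≤ g - 2 → a i * u (i + 1) * u i = u (i + 1) * u i * a (i + 1))
    (hC4 : a 1 * u 1 * a 1 = u 1)
    :
    ∀ i, 1 ≤ i → i ≤ g - 1 → a i * u i * a i = u i := by
  intro i hi
  induction i, hi using Nat.le_induction with
  | base => exact fun _ => hC4
  | succ n hn ih =>
    intro hng
    have conj_a : SemiconjBy (u (n + 1) * u n) (a (n + 1)) (a n) := by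
      rw [SemiconjBy, ← mul_assoc]
      exact (hC2 n hn (by omega)).symm
    have conj_u : SemiconjBy (u (n + 1) * u n) (u (n + 1)) (u n) := by
      rw [SemiconjBy, ← mul_assoc]
      exact (hu2 n hn (by omega)).symm
    exact conj_a.mul_mul_eq_of_mul_mul_eq conj_u (ih (by omega))

/-- relation (C4a): a_i u_i a_i = u_i for all i = 1, …, g-1. -/
theorem rel_C4a (g : ℕ) (a u : ℕ → G)
    (ha1 : ∀ i j, 1 ≤ i → i + 2 ≤ j → j ≤ g - 1 → a i * a j = a j * a i)
    (ha2 : ∀ i, 1 ≤ i → i + 1 ≤ g - 1 → a i * a (i + 1) * a i = a (i + 1) * a i * a (i + 1))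
    (hu1 : ∀ i j, 1 ≤ i → i + 2 ≤ j → j ≤ g - 1 → u i * u j = u j * u i)
    (hu2 : ∀ i, 1 ≤ i → i + 1 ≤ g - 1 → u i * u (i + 1) * u i = u (i + 1) * u i * u (i + 1))
    (hC1 : ∀ i j, 1 ≤ i → i ≤ g - 1 → 1 ≤ j → j ≤ g - 1 → (i + 2 ≤ j ∨ j + 2 ≤ i) →
      a i * u j = u j * a i)
    (hC2 : ∀ i, 1 ≤ i → i ≤ g - 2 → a i * u (i + 1) * u i = u (i + 1) * u i * a (i + 1))
    (hC3 : ∀ i, 1 ≤ i → i ≤ g - 2 → a (i + 1) * u i * u (i + 1) = u i * u (i + 1) * a i)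
    (hC4 : a 1 * u 1 * a 1 = u 1)
    (hC5 : u 2 * a 1 * a 2 * u 1 = a 1 * a 2)
    :
    ∀ i, 1 ≤ i → i ≤ g - 1 → a i * u i * a i = u i :=
  rel_C4a_general g a u hu2 hC2 hC4
end

section
/- Let G be a group containing elements a_1, ..., a_{g-1} and u_1, ..., u_{g-1} satisfying: the braid relations within each family, a_i u_j = u_j a_i for |i-j| > 1, a_i u_{i+1} u_i = u_{i+1} u_i a_{i+1}, a_{i+1} u_i u_{i+1} = u_i u_{i+1} a_i, a_1 u_1 a_1 = u_1, and u_2 a_1 a_2 u_1 = a_1 a_2. Then u_{i+1} a_i a_{i+1} u_i = a_i a_{i+1} for every i = 1, ..., g-2. -/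
variable {G : Type*} [Group G]

/-!
Conjugation by `w = u (i+2) * u (i+1) * u i` sends `a i, a (i+1), u i, u (i+1)` to
`a (i+1), a (i+2), u (i+1), u (i+2)`: the relations (C2) and the braid relations say that
`u (j+1) * u j` shifts `a j, u j` to `a (j+1), u (j+1)`, and (C1) and the far commutation of
the `u`'s let the third factor pass. Hence conjugating (C5a) at `i` yields (C5a) at `i + 1`, and
induction from (C5) gives every `i`.
-/

theorem SemiconjBy.eq_of_semiconjBy {M : Type*} [Mul M] [IsLeftCancelMul M] {w x x' y : M}
    (h : SemiconjBy w x y) (h' : SemiconjBy w x' y) : x = x' :=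
  mul_left_cancel (h.eq.trans h'.eq.symm)

section Shift

variable {M : Type*} [Semigroup M] {u x : ℕ → M} {i : ℕ}

theorem semiconjBy_shift_fst (hfar : Commute (u (i + 2)) (x i))
    (h₀ : SemiconjBy (u (i + 1) * u i) (x (i + 1)) (x i)) :
    SemiconjBy (u (i + 2) * u (i + 1) * u i) (x (i + 1)) (x i) := by
  rw [mul_assoc]
  exact SemiconjBy.mul_left hfar h₀

theorem semiconjBy_shift_snd (hfar : Commute (u i) (x (i + 2)))
    (h₁ : SemiconjBy (u (i + 2) * u (i + 1)) (x (i + 2)) (x (i + 1))) :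
    SemiconjBy (u (i + 2) * u (i + 1) * u i) (x (i + 2)) (x (i + 1)) :=
  SemiconjBy.mul_left h₁ hfar

end Shift

theorem rel_C5a_general (g : ℕ) (a u : ℕ → G)
    (hu1 : ∀ i j, 1 ≤ i → i + 2 ≤ j → j ≤ g - 1 → u i * u j = u j * u i)
    (hu2 : ∀ i, 1 ≤ i → i + 1 ≤ g - 1 → u i * u (i + 1) * u i = u (i + 1) * u i * u (i + 1))
    (hC1 : ∀ i j, 1 ≤ i → i ≤ g - 1 → 1 ≤ j → j ≤ g - 1 → (i + 2 ≤ j ∨ j + 2 ≤ i) →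
      a i * u j = u j * a i)
    (hC2 : ∀ i, 1 ≤ i → i ≤ g - 2 → a i * u (i + 1) * u i = u (i + 1) * u i * a (i + 1))
    (hC5 : u 2 * a 1 * a 2 * u 1 = a 1 * a 2)
    :
    ∀ i, 1 ≤ i → i ≤ g - 2 → u (i + 1) * a i * a (i + 1) * u i = a i * a (i + 1) := by
  have shift_a : ∀ j, 1 ≤ j → j ≤ g - 2 → SemiconjBy (u (j + 1) * u j) (a (j + 1)) (a j) :=
    fun j hj hjg => by simpa only [SemiconjBy, mul_assoc] using (hC2 j hj hjg).symm
  have shift_u : ∀ j, 1 ≤ j → j + 1 ≤ g - 1 → SemiconjBy (u (j + 1) * u j) (u (j + 1)) (u j) :=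
    fun j hj hjg => by simpa only [SemiconjBy, mul_assoc] using (hu2 j hj hjg).symm
  intro i hi
  induction i, hi using Nat.le_induction with
  | base => exact fun _ => hC5
  | succ i hi ih =>
    intro hig
    have hu_far : Commute (u i) (u (i + 2)) := hu1 i (i + 2) hi le_rfl (by omega)
    have ha₀ := semiconjBy_shift_fst
      (hC1 i (i + 2) hi (by omega) (by omega) (by omega) (.inl le_rfl)).symm
      (shift_a i hi (by omega))
    have ha₁ := semiconjBy_shift_snd
      (hC1 (i + 2) i (by omega) (by omega) hi (by omega) (.inr le_rfl)).symm
      (shift_a (i + 1) (by omega) hig)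
    have hu₀ := semiconjBy_shift_fst hu_far.symm (shift_u i hi (by omega))
    have hu₁ := semiconjBy_shift_snd hu_far (shift_u (i + 1) (by omega) (by omega))
    have lhs := ((hu₁.mul_right ha₀).mul_right ha₁).mul_right hu₀
    have rhs := ha₀.mul_right ha₁
    rw [ih (by omega)] at lhs
    exact lhs.eq_of_semiconjBy rhs

/-- relation (C5a): u_{i+1} a_i a_{i+1} u_i = a_i a_{i+1} for i = 1, …, g-2. -/
theorem rel_C5a (g : ℕ) (a u : ℕ → G)
    (ha1 : ∀ i j, 1 ≤ i → i + 2 ≤ j → j ≤ g - 1 → a i * a j = a j * a i)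
    (ha2 : ∀ i, 1 ≤ i → i + 1 ≤ g - 1 → a i * a (i + 1) * a i = a (i + 1) * a i * a (i + 1))
    (hu1 : ∀ i j, 1 ≤ i → i + 2 ≤ j → j ≤ g - 1 → u i * u j = u j * u i)
    (hu2 : ∀ i, 1 ≤ i → i + 1 ≤ g - 1 → u i * u (i + 1) * u i = u (i + 1) * u i * u (i + 1))
    (hC1 : ∀ i j, 1 ≤ i → i ≤ g - 1 → 1 ≤ j → j ≤ g - 1 → (i + 2 ≤ j ∨ j + 2 ≤ i) →
      a i * u j = u j * a i)
    (hC2 : ∀ i, 1 ≤ i → i ≤ g - 2 → a i * u (i + 1) * u i = u (i + 1) * u i * a (i + 1))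
    (hC3 : ∀ i, 1 ≤ i → i ≤ g - 2 → a (i + 1) * u i * u (i + 1) = u i * u (i + 1) * a i)
    (hC4 : a 1 * u 1 * a 1 = u 1)
    (hC5 : u 2 * a 1 * a 2 * u 1 = a 1 * a 2)
    :
    ∀ i, 1 ≤ i → i ≤ g - 2 → u (i + 1) * a i * a (i + 1) * u i = a i * a (i + 1) :=
  rel_C5a_general g a u hu1 hu2 hC1 hC2 hC5
end

section
/- Let G be a group with elements a_1, ..., a_{g-1}, u_1, ..., u_{g-1} (g ≥ 3) satisfying the braid relations within each family, a_i u_j = u_j a_i for |i-j|>1, a_i u_{i+1} u_i = u_{i+1} u_i a_{i+1}, a_{i+1} u_i u_{i+1} = u_i u_{i+1} a_i, a_1 u_1 a_1 = u_1, and u_2 a_1 a_2 u_1 = a_1 a_2. Then for each i = 1, ..., g-1 the element u_i conjugates a_i to its inverse up to the derived relation: a_i u_i a_i = u_i, equivalently u_i a_i u_i^{-1} = a_i^{-1}, and moreover setting x = a_i a_{i+1} (for i ≤ g-2) one has x a_i u_i x^{-1} = a_{i+1} u_{i+1}^{-1}. -/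
variable {G : Type*} [Group G]

/-!
Conjugation by `x = u_n u_{n+1}` sends `u_n ↦ u_{n+1}` (braid relation) and `a_n ↦ a_{n+1}`
(relation (C3)), so it carries (C4a) at index `n` to (C4a) at index `n + 1`. Likewise conjugation by
`u_n u_{n+1} u_{n+2}` shifts `u_n, u_{n+1}, a_n, a_{n+1}` up by one index (braid relations, (C1),
(C3)), carrying (C5a) `u_{i+1} a_i a_{i+1} u_i = a_i a_{i+1}` up one index. Both therefore follow by
induction from (C4) and (C5). Finally (C5a) says that `a_i a_{i+1}` conjugates `u_i` to `u_{i+1}⁻¹`,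
while the braid relation says it conjugates `a_i` to `a_{i+1}`.
-/

theorem SemiconjBy.right_unique {x y z w : G} (h : SemiconjBy x y z) (h' : SemiconjBy x y w) :
    z = w :=
  mul_right_cancel (h.eq.symm.trans h'.eq)

theorem semiconjBy_mul_of_braid {v w : G} (h : v * w * v = w * v * w) : SemiconjBy (v * w) v w := by
  rw [SemiconjBy, h, mul_assoc]

theorem semiconjBy_mul_of_mul_mul_eq {v w b c : G} (h : c * v * w = v * w * b) :
    SemiconjBy (v * w) b c := by
  rw [SemiconjBy, ← mul_assoc, h]

theorem conj_inv_of_mul_mul_eq {x y : G} (h : x * y * x = y) : y * x * y⁻¹ = x⁻¹ :=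
  eq_inv_of_mul_eq_one_right (by rw [← mul_assoc, ← mul_assoc, h, mul_inv_cancel])

theorem rel_C4a_succ {v w b c : G} (hC3 : c * v * w = v * w * b) (hbraid : v * w * v = w * v * w)
    (hC4a : b * v * b = v) : c * w * c = w := by
  have hv := semiconjBy_mul_of_braid hbraid
  have hb := semiconjBy_mul_of_mul_mul_eq hC3
  have hrel := (hb.mul_right hv).mul_right hb
  rw [hC4a] at hrel
  exact (hv.right_unique hrel).symm

theorem rel_C5a_succ {p q r b c d : G}
    (hpq : p * q * p = q * p * q) (hqr : q * r * q = r * q * r) (hpr : Commute p r)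
    (hbr : Commute b r) (hdp : Commute d p)
    (hC3 : c * p * q = p * q * b) (hC3' : d * q * r = q * r * c)
    (hC5a : q * b * c * p = b * c) : r * c * d * q = c * d := by
  have hp : SemiconjBy (p * q * r) p q := (semiconjBy_mul_of_braid hpq).mul_left hpr.symm
  have hb : SemiconjBy (p * q * r) b c := (semiconjBy_mul_of_mul_mul_eq hC3).mul_left hbr.symm
  have hq : SemiconjBy (p * q * r) q r := by
    rw [mul_assoc]; exact SemiconjBy.mul_left hpr (semiconjBy_mul_of_braid hqr)
  have hc : SemiconjBy (p * q * r) c d := by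
    rw [mul_assoc]; exact SemiconjBy.mul_left hdp.symm (semiconjBy_mul_of_mul_mul_eq hC3')
  have hrel := ((hq.mul_right hb).mul_right hc).mul_right hp
  rw [hC5a] at hrel
  exact ((hb.mul_right hc).right_unique hrel).symm

theorem conj_crosscap_slide {p q v w : G} (hbraid : p * q * p = q * p * q)
    (hC5a : v * p * q * w = p * q) : (p * q) * (p * w) * (p * q)⁻¹ = q * v⁻¹ := by
  have hw : SemiconjBy (p * q) w v⁻¹ := by
    rw [SemiconjBy, eq_inv_mul_iff_mul_eq, ← mul_assoc, ← mul_assoc, hC5a]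
  exact (SemiconjBy.conj_mk _ _).right_unique ((semiconjBy_mul_of_braid hbraid).mul_right hw)

theorem rel_C4a_and_conj_general (g : ℕ) (a u : ℕ → G)
    (ha2 : ∀ i, 1 ≤ i → i + 1 ≤ g - 1 → a i * a (i + 1) * a i = a (i + 1) * a i * a (i + 1))
    (hu1 : ∀ i j, 1 ≤ i → i + 2 ≤ j → j ≤ g - 1 → u i * u j = u j * u i)
    (hu2 : ∀ i, 1 ≤ i → i + 1 ≤ g - 1 → u i * u (i + 1) * u i = u (i + 1) * u i * u (i + 1))
    (hC1 : ∀ i j, 1 ≤ i → i ≤ g - 1 → 1 ≤ j → j ≤ g - 1 → (i + 2 ≤ j ∨ j + 2 ≤ i) →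
      a i * u j = u j * a i)
    (hC3 : ∀ i, 1 ≤ i → i ≤ g - 2 → a (i + 1) * u i * u (i + 1) = u i * u (i + 1) * a i)
    (hC4 : a 1 * u 1 * a 1 = u 1)
    (hC5 : u 2 * a 1 * a 2 * u 1 = a 1 * a 2)
    :
    (∀ i, 1 ≤ i → i ≤ g - 1 →
      a i * u i * a i = u i ∧ u i * a i * (u i)⁻¹ = (a i)⁻¹) ∧
    (∀ i, 1 ≤ i → i ≤ g - 2 →
      (a i * a (i + 1)) * (a i * u i) * (a i * a (i + 1))⁻¹ =
        a (i + 1) * (u (i + 1))⁻¹) := by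
  have C4a : ∀ i, 1 ≤ i → i ≤ g - 1 → a i * u i * a i = u i := by
    intro i hi
    induction i, hi using Nat.le_induction with
    | base => exact fun _ => hC4
    | succ n hn ih =>
      exact fun _ => rel_C4a_succ (hC3 n hn (by omega)) (hu2 n hn (by omega)) (ih (by omega))
  have C5a : ∀ i, 1 ≤ i → i ≤ g - 2 → u (i + 1) * a i * a (i + 1) * u i = a i * a (i + 1) := by
    intro i hi
    induction i, hi using Nat.le_induction with
    | base => exact fun _ => hC5
    | succ n hn ih =>
      exact fun _ => rel_C5a_succ (hu2 n hn (by omega)) (hu2 (n + 1) (by omega) (by omega))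
        (hu1 n (n + 2) hn (by omega) (by omega))
        (hC1 n (n + 2) hn (by omega) (by omega) (by omega) (Or.inl (by omega)))
        (hC1 (n + 2) n (by omega) (by omega) hn (by omega) (Or.inr (by omega)))
        (hC3 n hn (by omega)) (hC3 (n + 1) (by omega) (by omega)) (ih (by omega))
  exact ⟨fun i h1 h2 => ⟨C4a i h1 h2, conj_inv_of_mul_mul_eq (C4a i h1 h2)⟩,
    fun i h1 h2 => conj_crosscap_slide (ha2 i h1 (by omega)) (C5a i h1 h2)⟩

/-- (C4a) a_i u_i a_i = u_i, equivalently u_i a_i u_i⁻¹ = a_i⁻¹, for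
1 ≤ i ≤ g-1; and, for 1 ≤ i ≤ g-2 and x = a_i a_{i+1},
x (a_i u_i) x⁻¹ = a_{i+1} u_{i+1}⁻¹. -/
theorem rel_C4a_and_conj (g : ℕ) (hg : 3 ≤ g) (a u : ℕ → G)
    (ha1 : ∀ i j, 1 ≤ i → i + 2 ≤ j → j ≤ g - 1 → a i * a j = a j * a i)
    (ha2 : ∀ i, 1 ≤ i → i + 1 ≤ g - 1 → a i * a (i + 1) * a i = a (i + 1) * a i * a (i + 1))
    (hu1 : ∀ i j, 1 ≤ i → i + 2 ≤ j → j ≤ g - 1 → u i * u j = u j * u i)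
    (hu2 : ∀ i, 1 ≤ i → i + 1 ≤ g - 1 → u i * u (i + 1) * u i = u (i + 1) * u i * u (i + 1))
    (hC1 : ∀ i j, 1 ≤ i → i ≤ g - 1 → 1 ≤ j → j ≤ g - 1 → (i + 2 ≤ j ∨ j + 2 ≤ i) →
      a i * u j = u j * a i)
    (hC2 : ∀ i, 1 ≤ i → i ≤ g - 2 → a i * u (i + 1) * u i = u (i + 1) * u i * a (i + 1))
    (hC3 : ∀ i, 1 ≤ i → i ≤ g - 2 → a (i + 1) * u i * u (i + 1) = u i * u (i + 1) * a i)
    (hC4 : a 1 * u 1 * a 1 = u 1)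
    (hC5 : u 2 * a 1 * a 2 * u 1 = a 1 * a 2)
    :
    (∀ i, 1 ≤ i → i ≤ g - 1 →
      a i * u i * a i = u i ∧ u i * a i * (u i)⁻¹ = (a i)⁻¹) ∧
    (∀ i, 1 ≤ i → i ≤ g - 2 →
      (a i * a (i + 1)) * (a i * u i) * (a i * a (i + 1))⁻¹ =
        a (i + 1) * (u (i + 1))⁻¹) :=
  rel_C4a_and_conj_general g a u ha2 hu1 hu2 hC1 hC3 hC4 hC5
end
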